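/- arXiv:1308.2525 — 3 statements merged into one kernel-verified Lean document; each statement's English description precedes it below -/
import Mathlib

section
/- For a prime p and a positive integer m with p ∤ m, if there exists ν ∈ ℕ such that p^ν ≡ -1 (mod m), then for every α = (a1,a2,a3) ∈ (Z/mZ)^3 with all ai ≠ 0 and a1+a2+a3 ≠ 0, and o the multiplicative order of p mod m, the sum ∑_{j=0}^{o-1} |p^j·α| equals o, where |β| denotes ⌊(b1+b2+b3)/m⌋ for the canonical representatives 0 < bi < m of the coordinates of β and p^j·α means coordinatewise multiplication by p^j. -/
/-- Arithmetic helper: if `0 < r = s % m < m` and `s < 3*m`, then `s/m + (3*m - s)/m = 2`. -/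
lemma fermat_aux_div (m s : ℕ) (hm : 0 < m) (hs3 : s < 3 * m) (hr : s % m ≠ 0) :
    s / m + (3 * m - s) / m = 2 := by
  have hqr : m * (s / m) + s % m = s := Nat.div_add_mod s m
  have hrm : s % m < m := Nat.mod_lt _ hm
  have hq2 : s / m < 3 := (Nat.div_lt_iff_lt_mul hm).2 hs3
  set q := s / m with hq
  set r := s % m with hrdef
  have ht : m * q ≤ 2 * m := by
    calc m * q ≤ m * 2 := Nat.mul_le_mul_left m (by omega)
    _ = 2 * m := by ring
  have key : 3 * m - s = (m - r) + (2 - q) * m := by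
    have h1 : (2 - q) * m = 2 * m - m * q := by
      rw [Nat.sub_mul]; ring_nf
    rw [h1]; omega
  rw [key, Nat.add_mul_div_right _ _ hm, Nat.div_eq_of_lt (by omega)]
  omega

/-- Supersingularity criterion for Fermat characters: if p^ν ≡ -1 (mod m) for some ν,
then for every character α = (a₁,a₂,a₃) with nonzero entries and nonzero sum,
the sum of the values |p^j·α| = ⌊(b₁+b₂+b₃)/m⌋ over j = 0, ..., o-1 equals o,
where o is the multiplicative order of p mod m. -/
theorem fermat_supersingular_character_sum (p m : ℕ) (hp : p.Prime) (hm : 2 ≤ m)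
    (hpm : ¬ p ∣ m) (hν : ∃ ν : ℕ, (p : ZMod m) ^ ν = -1)
    (a1 a2 a3 : ZMod m) (h1 : a1 ≠ 0) (h2 : a2 ≠ 0) (h3 : a3 ≠ 0)
    (hs : a1 + a2 + a3 ≠ 0) :
    ∑ j ∈ Finset.range (orderOf (p : ZMod m)),
        (((p : ZMod m) ^ j * a1).val + ((p : ZMod m) ^ j * a2).val
          + ((p : ZMod m) ^ j * a3).val) / m
      = orderOf (p : ZMod m) := by
  haveI : NeZero m := ⟨by omega⟩
  obtain ⟨ν, hν⟩ := hν
  have hcop : Nat.Coprime p m := (hp.coprime_iff_not_dvd).2 hpm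
  set u := ZMod.unitOfCoprime p hcop with hu
  have hup : ((u : ZMod m)) = (p : ZMod m) := rfl
  set o := orderOf (p : ZMod m) with ho
  have ho_pos : 0 < o := by
    have : o = orderOf u := by rw [ho, ← hup, orderOf_units]
    rw [this]; exact orderOf_pos u
  -- the function F
  set F : ZMod m → ℕ := fun x => ((x * a1).val + (x * a2).val + (x * a3).val) / m with hF
  -- Key: for x a unit, F x + F (-x) = 2
  have key : ∀ x : ZMod m, IsUnit x → F x + F (-x) = 2 := by
    intro x hx
    have hx1 : x * a1 ≠ 0 := fun h => h1 ((hx.mul_right_eq_zero).1 h)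
    have hx2 : x * a2 ≠ 0 := fun h => h2 ((hx.mul_right_eq_zero).1 h)
    have hx3 : x * a3 ≠ 0 := fun h => h3 ((hx.mul_right_eq_zero).1 h)
    have hxs : x * a1 + x * a2 + x * a3 ≠ 0 := by
      intro h
      apply hs
      apply (hx.mul_right_eq_zero).1
      rw [mul_add, mul_add]; exact h
    set s := (x * a1).val + (x * a2).val + (x * a3).val with hsdef
    have hv1 : (x * a1).val ≠ 0 := fun h => hx1 ((ZMod.val_eq_zero _).1 h)
    have hv2 : (x * a2).val ≠ 0 := fun h => hx2 ((ZMod.val_eq_zero _).1 h)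
    have hv3 : (x * a3).val ≠ 0 := fun h => hx3 ((ZMod.val_eq_zero _).1 h)
    have hl1 : (x * a1).val < m := ZMod.val_lt _
    have hl2 : (x * a2).val < m := ZMod.val_lt _
    have hl3 : (x * a3).val < m := ZMod.val_lt _
    have hsmod : s % m ≠ 0 := by
      have : (x * a1 + x * a2 + x * a3).val = s % m := by
        rw [ZMod.val_add, ZMod.val_add, Nat.mod_add_mod]
      intro h
      apply hxs
      apply (ZMod.val_eq_zero _).1
      rw [this, h]
    have hneg : F (-x) = (3 * m - s) / m := by
      have e1 : (-x) * a1 = -(x * a1) := by ring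
      have e2 : (-x) * a2 = -(x * a2) := by ring
      have e3 : (-x) * a3 = -(x * a3) := by ring
      rw [hF]
      simp only [e1, e2, e3, ZMod.neg_val, if_neg hx1, if_neg hx2, if_neg hx3]
      congr 1
      omega
    rw [hneg]
    exact fermat_aux_div m s (by omega) (by omega) hsmod
  -- Reindexing: sum of F(p^(j+ν)) over range o equals sum of F(p^j)
  have hshift : ∑ j ∈ Finset.range o, F ((p : ZMod m) ^ (j + ν))
      = ∑ j ∈ Finset.range o, F ((p : ZMod m) ^ j) := by
    have hmod : ∀ j, (p : ZMod m) ^ (j + ν) = (p : ZMod m) ^ ((j + ν) % o) := by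
      intro j
      rw [ho, pow_mod_orderOf]
    simp only [hmod]
    rw [← Fin.sum_univ_eq_sum_range (fun j => F ((p : ZMod m) ^ ((j + ν) % o))) o,
        ← Fin.sum_univ_eq_sum_range (fun j => F ((p : ZMod m) ^ j)) o]
    have hoNe : NeZero o := ⟨by omega⟩
    set c : Fin o := ⟨ν % o, Nat.mod_lt _ ho_pos⟩ with hc
    have := Equiv.sum_comp (Equiv.addRight c) (fun i : Fin o => F ((p : ZMod m) ^ (i : ℕ)))
    rw [← this]
    apply Finset.sum_congr rfl
    intro i _
    congr 2
    show ((i : ℕ) + ν) % o = ((Equiv.addRight c i : Fin o) : ℕ)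
    have : ((Equiv.addRight c i : Fin o) : ℕ) = ((i : ℕ) + ν % o) % o := by
      simp [Equiv.addRight, Fin.add_def, hc]
    rw [this]
    conv_lhs => rw [Nat.add_mod]
    rw [Nat.mod_eq_of_lt i.isLt]
  -- Main computation
  have hsum2 : ∑ j ∈ Finset.range o, F ((p : ZMod m) ^ j)
      + ∑ j ∈ Finset.range o, F ((p : ZMod m) ^ j) = 2 * o := by
    nth_rewrite 2 [← hshift]
    rw [← Finset.sum_add_distrib]
    have : ∀ j ∈ Finset.range o, F ((p : ZMod m) ^ j) + F ((p : ZMod m) ^ (j + ν)) = 2 := by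
      intro j _
      have hxu : IsUnit ((p : ZMod m) ^ j) := by
        apply IsUnit.pow
        rw [← hup]; exact u.isUnit
      have : (p : ZMod m) ^ (j + ν) = -((p : ZMod m) ^ j) := by
        rw [pow_add, hν, mul_neg_one]
      rw [this]
      exact key _ hxu
    rw [Finset.sum_congr rfl this, Finset.sum_const, Finset.card_range]
    ring
  have : ∑ j ∈ Finset.range o, F ((p : ZMod m) ^ j) = o := by omega
  exact this
end

section
/- The polynomial λ⁴ + λ³ − 132λ² + 121λ + 14641 is irreducible over ℚ and has no root of the form 11ζ with ζ a root of unity; in particular, no root of this polynomial divided by 11 is a root of unity. -/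
/-!
Modulo 7, χ has no root and is not a product of two monic quadratics, so it is irreducible over
`ℤ`, and over `ℚ` by Gauss's lemma.

If `α = 11 ζ` with `ζ` an algebraic integer (for instance a root of unity), then `χ`, being the
minimal polynomial of `α` over `ℤ`, divides `m.scaleRoots 11` for the minimal polynomial `m` of
`ζ`. Modulo 11 the latter becomes `X ^ deg m`, while `χ ≡ X³ (X + 1)` vanishes at `-1`.
-/

open Polynomial

namespace Polynomial

variable {R : Type*} [CommRing R]

theorem Monic.eq_X_sq_add_C_mul_X_add_C {p : R[X]} (hm : p.Monic) (hd : p.natDegree = 2) :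
    p = X ^ 2 + C (p.coeff 1) * X + C (p.coeff 0) := by
  conv_lhs => rw [hm.as_sum, hd]
  simp only [Finset.sum_range_succ, Finset.sum_range_zero, pow_zero, pow_one, mul_one, zero_add]
  ring

theorem Monic.irreducible_of_natDegree_eq_four [NoZeroDivisors R] {f : R[X]} (hm : f.Monic)
    (hd : f.natDegree = 4) (hroot : ∀ x, ¬ f.IsRoot x)
    (hquad : ∀ a b c d : R, ¬ (a + c = f.coeff 3 ∧ b + a * c + d = f.coeff 2 ∧
      a * d + b * c = f.coeff 1 ∧ b * d = f.coeff 0)) :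
    Irreducible f := by
  refine hm.irreducible_iff_natDegree'.mpr ⟨fun h => by simp [h] at hd, ?_⟩
  rintro g h hg hh rfl hdeg
  rw [hd] at hdeg
  have hgh := hg.natDegree_mul hh
  obtain hdh | hdh : h.natDegree = 1 ∨ h.natDegree = 2 := by simp at hdeg; omega
  · apply hroot (-h.coeff 0)
    rw [hh.eq_X_add_C hdh]
    simp
  · have hdg : g.natDegree = 2 := by omega
    rw [hg.eq_X_sq_add_C_mul_X_add_C hdg, hh.eq_X_sq_add_C_mul_X_add_C hdh] at hquad
    set a := g.coeff 1; set b := g.coeff 0; set c := h.coeff 1; set d := h.coeff 0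
    have hprod : (X ^ 2 + C a * X + C b) * (X ^ 2 + C c * X + C d) = X ^ 4 + C (a + c) * X ^ 3
        + C (b + a * c + d) * X ^ 2 + C (a * d + b * c) * X + C (b * d) := by
      simp only [C_add, C_mul]; ring
    apply hquad a b c d
    simp only [hprod, coeff_add, coeff_X_pow, coeff_C_mul_X_pow, coeff_C_mul_X, coeff_C]
    norm_num

theorem minpoly_algebraMap_mul_dvd_scaleRoots {A : Type*} [CommRing A] [IsDomain R]
    [IsIntegrallyClosed R] [IsDomain A] [Algebra R A] [Module.IsTorsionFree R A] {x : A}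
    (hx : IsIntegral R x) (r : R) :
    minpoly R (algebraMap R A r * x) ∣ (minpoly R x).scaleRoots r :=
  minpoly.isIntegrallyClosed_dvd (isIntegral_algebraMap.mul hx)
    (scaleRoots_aeval_eq_zero (minpoly.aeval R x))

theorem Monic.map_scaleRoots_eq_X_pow {S : Type*} [CommRing S] [Nontrivial S] {p : R[X]}
    (hp : p.Monic) {r : R} {φ : R →+* S} (hr : φ r = 0) :
    (p.scaleRoots r).map φ = X ^ p.natDegree := by
  rw [map_scaleRoots _ _ _ (by simp [hp.leadingCoeff]), hr, scaleRoots_zero,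
    (hp.map φ).leadingCoeff, one_smul, hp.natDegree_map]

end Polynomial

noncomputable def chi (R : Type*) [CommRing R] : R[X] :=
  X ^ 4 + X ^ 3 - C 132 * X ^ 2 + C 121 * X + C 14641

instance fact_prime_seven : Fact (Nat.Prime 7) := ⟨by norm_num⟩

instance fact_prime_eleven : Fact (Nat.Prime 11) := ⟨by norm_num⟩

section chi

variable {R : Type*} [CommRing R]

theorem monic_chi [Nontrivial R] : (chi R).Monic := by
  unfold chi; monicity!

theorem natDegree_chi [Nontrivial R] : (chi R).natDegree = 4 := by
  unfold chi; compute_degree!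

theorem map_chi {S : Type*} [CommRing S] (φ : R →+* S) : (chi R).map φ = chi S := by
  simp [chi, map_ofNat φ]

end chi

theorem irreducible_chi_zmod_seven : Irreducible (chi (ZMod 7)) := by
  refine monic_chi.irreducible_of_natDegree_eq_four natDegree_chi ?_ ?_
  · simp only [chi, IsRoot.def, eval_add, eval_sub, eval_mul, eval_pow, eval_X, eval_C]
    decide
  · simp only [chi, coeff_add, coeff_sub, coeff_X_pow, coeff_C_mul_X_pow, coeff_C_mul_X, coeff_C]
    norm_num
    decide

theorem irreducible_chi_int : Irreducible (chi ℤ) :=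
  monic_chi.irreducible_of_irreducible_map (Int.castRingHom (ZMod 7)) _
    (map_chi (Int.castRingHom (ZMod 7)) ▸ irreducible_chi_zmod_seven)

theorem irreducible_chi_rat : Irreducible (chi ℚ) :=
  map_chi (R := ℤ) (Int.castRingHom ℚ) ▸
    (IsPrimitive.Int.irreducible_iff_irreducible_map_cast monic_chi.isPrimitive).mp
      irreducible_chi_int

theorem chi_zmod_eleven : chi (ZMod 11) = X ^ 3 * (X + 1) := by
  have h132 : (132 : ZMod 11) = 0 := by decide
  have h121 : (121 : ZMod 11) = 0 := by decide
  have h14641 : (14641 : ZMod 11) = 0 := by decide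
  simp only [chi, h132, h121, h14641, C_0]
  ring

theorem chi_root_ne_eleven_mul {A : Type*} [CommRing A] [IsDomain A] [CharZero A] {α ζ : A}
    (hα : aeval α (chi ℤ) = 0) (hζ : IsIntegral ℤ ζ) : α ≠ 11 * ζ := by
  intro hαζ
  replace hαζ : α = algebraMap ℤ A 11 * ζ := by rw [hαζ, map_ofNat]
  subst hαζ
  have hdvd : chi ℤ ∣ (minpoly ℤ ζ).scaleRoots 11 := by
    have hint : IsIntegral ℤ (algebraMap ℤ A 11 * ζ) := isIntegral_algebraMap.mul hζ
    refine dvd_trans ?_ (minpoly_algebraMap_mul_dvd_scaleRoots hζ 11)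
    exact (minpoly.irreducible hint).dvd_symm irreducible_chi_int
      (minpoly.isIntegrallyClosed_dvd hint hα)
  have hmod := Polynomial.map_dvd (Int.castRingHom (ZMod 11)) hdvd
  rw [map_chi, (minpoly.monic hζ).map_scaleRoots_eq_X_pow (by decide), chi_zmod_eleven] at hmod
  have hroot := eval_dvd (x := -1) hmod
  simp only [eval_mul, eval_pow, eval_add, eval_X, eval_one, neg_add_cancel, mul_zero,
    zero_dvd_iff] at hroot
  exact (isUnit_neg_one.pow _).ne_zero hroot

/-- The polynomial λ⁴ + λ³ − 132λ² + 121λ + 14641 is irreducible over ℚ,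
and no root α (in ℂ) has α/11 a root of unity. -/
theorem chi_11_irreducible_no_unit_root :
    Irreducible (X ^ 4 + X ^ 3 - C 132 * X ^ 2 + C 121 * X + C 14641 : ℚ[X]) ∧
    ∀ α : ℂ, (aeval α) (X ^ 4 + X ^ 3 - C 132 * X ^ 2 + C 121 * X + C 14641 : ℚ[X]) = 0 →
      ∀ n : ℕ, 0 < n → (α / 11) ^ n ≠ 1 := by
  refine ⟨irreducible_chi_rat, fun α hα n hn hunit => ?_⟩
  have hα' : aeval α (chi ℤ) = 0 := by
    rw [← aeval_map_algebraMap ℚ, algebraMap_int_eq, map_chi]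
    exact hα
  exact chi_root_ne_eleven_mul hα' (IsIntegral.of_pow hn (hunit ▸ isIntegral_one)) (by ring)
end

section
/- The quartic polynomial w⁴ + λ·a·y⁴ + λ(λ²−1)yz³ − pλ(1−λ)yz²w in variables y, z, w over ℚ(λ) (with λ transcendental, a, p fixed nonzero rationals) has discriminant locus (in λ, beyond λ = 0, 1, ∞) given by the roots of the degree 8 polynomial 3⁹a(λ+1)⁸ − p¹²λ³(λ−1)⁴, and this polynomial, viewed as a linear polynomial in a over ℚ(λ), is irreducible over ℚ(λ); consequently as a polynomial in λ over ℚ(a) it is irreducible. -/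
open Polynomial

/-- The swap of the two variables of `ℚ[X][X]`, as a ring homomorphism. -/
noncomputable def swapHom : Polynomial (Polynomial ℚ) →+* Polynomial (Polynomial ℚ) :=
  eval₂RingHom (eval₂RingHom (C.comp C) X) (C X)

lemma swapHom_X : swapHom X = C X := eval₂_X _ _

lemma swapHom_C (q : Polynomial ℚ) : swapHom (C q) = eval₂ (C.comp C) X q := eval₂_C _ _

lemma swapHom_CX : swapHom (C X) = X := by rw [swapHom_C, eval₂_X]

lemma swapHom_CC (r : ℚ) : swapHom (C (C r)) = C (C r) := by
  rw [swapHom_C, eval₂_C, RingHom.comp_apply]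

lemma swapHom_comp : swapHom.comp swapHom = RingHom.id (Polynomial (Polynomial ℚ)) := by
  apply ringHom_ext'
  · apply ringHom_ext'
    · apply RingHom.ext; intro r
      simp [RingHom.comp_apply, swapHom_CC]
    · simp [RingHom.comp_apply, swapHom_CX, swapHom_X]
  · simp [RingHom.comp_apply, swapHom_X, swapHom_CX]

/-- The swap of the two variables of `ℚ[X][X]`, as a ring equivalence. -/
noncomputable def swapEquiv : Polynomial (Polynomial ℚ) ≃+* Polynomial (Polynomial ℚ) :=
  RingEquiv.ofRingHom swapHom swapHom swapHom_comp swapHom_comp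

lemma swapEquiv_apply (P : Polynomial (Polynomial ℚ)) : swapEquiv P = swapHom P := rfl

/-- A linear polynomial over a field with nonzero leading coefficient is irreducible. -/
lemma linear_irred {K : Type*} [Field K] (a b : K) (ha : a ≠ 0) :
    Irreducible (C a * X - C b : K[X]) := by
  apply irreducible_of_degree_eq_one
  rw [sub_eq_add_neg, ← C_neg]
  exact degree_linear ha

/-- The discriminant polynomial F = 3⁹·a·(λ+1)⁸ − p¹²·λ³·(λ−1)⁴ of the pencil of
residual quartics, viewed as a (linear) polynomial in the indeterminate a over the
field ℚ(λ), is irreducible; consequently, viewed as a polynomial in λ over the field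
ℚ(a), it is irreducible as well. Here `RatFunc ℚ` plays the role of ℚ(λ) resp. ℚ(a),
with `RatFunc.X` the transcendental element, and p is a prime. -/
theorem discriminant_pencil_irreducible (p : ℕ) (hp : p.Prime) :
    Irreducible
      (C ((3 : RatFunc ℚ) ^ 9 * (RatFunc.X + 1) ^ 8) * X
        - C ((p : RatFunc ℚ) ^ 12 * RatFunc.X ^ 3 * (RatFunc.X - 1) ^ 4)
        : (RatFunc ℚ)[X]) ∧
    Irreducible
      (C ((3 : RatFunc ℚ) ^ 9 * RatFunc.X) * (X + 1) ^ 8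
        - C ((p : RatFunc ℚ) ^ 12) * X ^ 3 * (X - 1) ^ 4
        : (RatFunc ℚ)[X]) := by
  have hp0 : (p : ℚ) ≠ 0 := Nat.cast_ne_zero.mpr hp.ne_zero
  -- the coefficients of F, as a linear polynomial in `a` over `ℚ[λ]`
  set g : Polynomial ℚ := (3 : Polynomial ℚ) ^ 9 * (X + 1) ^ 8 with hgdef
  set h : Polynomial ℚ := (p : Polynomial ℚ) ^ 12 * X ^ 3 * (X - 1) ^ 4 with hhdef
  have hX1 : (X + 1 : Polynomial ℚ) ≠ 0 := by
    simpa using X_add_C_ne_zero (1 : ℚ)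
  have hg0 : g ≠ 0 :=
    mul_ne_zero (pow_ne_zero _ (by norm_num)) (pow_ne_zero _ hX1)
  -- part 1
  have alg_g : algebraMap (Polynomial ℚ) (RatFunc ℚ) g
      = (3 : RatFunc ℚ) ^ 9 * (RatFunc.X + 1) ^ 8 := by
    simp [hgdef, map_mul, map_pow, map_add, map_one, RatFunc.algebraMap_X, map_ofNat]
  have alg_h : algebraMap (Polynomial ℚ) (RatFunc ℚ) h
      = (p : RatFunc ℚ) ^ 12 * RatFunc.X ^ 3 * (RatFunc.X - 1) ^ 4 := by
    simp [hhdef, map_mul, map_pow, map_sub, map_one, RatFunc.algebraMap_X]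
  have halg_g0 : algebraMap (Polynomial ℚ) (RatFunc ℚ) g ≠ 0 := by
    simpa using (map_ne_zero_of_mem_nonZeroDivisors _
      (IsFractionRing.injective (Polynomial ℚ) (RatFunc ℚ))
      (mem_nonZeroDivisors_of_ne_zero hg0))
  have part1 : Irreducible
      (C ((3 : RatFunc ℚ) ^ 9 * (RatFunc.X + 1) ^ 8) * X
        - C ((p : RatFunc ℚ) ^ 12 * RatFunc.X ^ 3 * (RatFunc.X - 1) ^ 4)
        : (RatFunc ℚ)[X]) := by
    rw [← alg_g, ← alg_h]
    exact linear_irred _ _ halg_g0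
  refine ⟨part1, ?_⟩
  -- coprimality of g and h in ℚ[X]
  have base1 : IsCoprime (X + 1 : Polynomial ℚ) X := by
    have := isCoprime_X_sub_C_of_isUnit_sub (R := ℚ) (a := (-1)) (b := 0) (by norm_num)
    simpa [sub_eq_add_neg] using this
  have base2 : IsCoprime (X + 1 : Polynomial ℚ) (X - 1) := by
    have := isCoprime_X_sub_C_of_isUnit_sub (R := ℚ) (a := (-1)) (b := 1) (by norm_num)
    simpa [sub_eq_add_neg] using this
  have hcop0 : IsCoprime ((X + 1 : Polynomial ℚ) ^ 8) (X ^ 3 * (X - 1) ^ 4) :=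
    (base1.pow).mul_right (base2.pow)
  have hu3 : IsUnit ((3 : Polynomial ℚ) ^ 9) := by
    apply IsUnit.pow
    have : IsUnit (C (3 : ℚ)) := isUnit_C.mpr (by norm_num)
    rwa [map_ofNat] at this
  have hup : IsUnit ((p : Polynomial ℚ) ^ 12) := by
    apply IsUnit.pow
    have : IsUnit (C (p : ℚ)) := isUnit_C.mpr (isUnit_iff_ne_zero.mpr hp0)
    rwa [map_natCast] at this
  have hcop : IsCoprime g h := by
    rw [hgdef, hhdef, mul_assoc]
    rw [isCoprime_mul_unit_left_left hu3, isCoprime_mul_unit_left_right hup]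
    exact hcop0
  -- H = C g * X - C h is primitive and irreducible over ℚ[X]
  have hprimH : (C g * X - C h : Polynomial (Polynomial ℚ)).IsPrimitive := by
    intro r hr
    rw [C_dvd_iff_dvd_coeff] at hr
    have h1 := hr 1
    have h0 := hr 0
    simp [coeff_sub, coeff_C_mul] at h1 h0
    exact hcop.isUnit_of_dvd' h1 h0
  have hirrH : Irreducible (C g * X - C h : Polynomial (Polynomial ℚ)) := by
    rw [hprimH.irreducible_iff_irreducible_map_fraction_map (K := RatFunc ℚ)]
    rw [Polynomial.map_sub, Polynomial.map_mul, map_C, map_C, map_X, alg_g, alg_h]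
    exact part1
  -- G is the polynomial of part 2, over ℚ[X]
  set G : Polynomial (Polynomial ℚ) :=
    C (C ((3 : ℚ) ^ 9) * X) * (X + 1) ^ 8 - C (C ((p : ℚ) ^ 12)) * X ^ 3 * (X - 1) ^ 4
    with hGdef
  have hswapG : swapEquiv G = C g * X - C h := by
    rw [hGdef, swapEquiv_apply]
    simp only [C_mul, map_sub, map_mul, map_pow, map_add, map_one, swapHom_CC,
      swapHom_CX, swapHom_X]
    rw [hgdef, hhdef]
    simp only [C_mul, C_pow, C_add, C_sub, C_1, map_ofNat, map_natCast]
    ring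
  have hirrG : Irreducible G := by
    rw [← MulEquiv.irreducible_iff (swapEquiv : Polynomial (Polynomial ℚ) ≃+*
      Polynomial (Polynomial ℚ)), hswapG]
    exact hirrH
  -- G is primitive
  have e8 : G.coeff 8 = C ((3 : ℚ) ^ 9) * X := by
    rw [hGdef]
    rw [(by rw [map_neg, C_1]; ring : (X - 1 : Polynomial (Polynomial ℚ)) = X + C (-1)),
      mul_assoc]
    simp only [coeff_sub, coeff_C_mul, coeff_X_pow_mul', coeff_X_add_one_pow,
      coeff_X_add_C_pow]
    norm_num
  have e7 : G.coeff 7 = 8 * (C ((3 : ℚ) ^ 9) * X) - C ((p : ℚ) ^ 12) := by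
    rw [hGdef]
    rw [(by rw [map_neg, C_1]; ring : (X - 1 : Polynomial (Polynomial ℚ)) = X + C (-1)),
      mul_assoc]
    simp only [coeff_sub, coeff_C_mul, coeff_X_pow_mul', coeff_X_add_one_pow,
      coeff_X_add_C_pow]
    norm_num
    ring
  have hprimG : G.IsPrimitive := by
    intro r hr
    rw [C_dvd_iff_dvd_coeff] at hr
    have hd : r ∣ C ((p : ℚ) ^ 12) := by
      have : (C ((p : ℚ) ^ 12) : Polynomial ℚ) = 8 * G.coeff 8 - G.coeff 7 := by
        rw [e8, e7]; ring
      rw [this]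
      exact dvd_sub ((hr 8).mul_left 8) (hr 7)
    exact isUnit_of_dvd_unit hd (isUnit_C.mpr (isUnit_iff_ne_zero.mpr (by positivity)))
  -- conclude part 2 via Gauss's lemma
  have := (hprimG.irreducible_iff_irreducible_map_fraction_map (K := RatFunc ℚ)).mp hirrG
  have hmapG : G.map (algebraMap (Polynomial ℚ) (RatFunc ℚ))
      = (C ((3 : RatFunc ℚ) ^ 9 * RatFunc.X) * (X + 1) ^ 8
        - C ((p : RatFunc ℚ) ^ 12) * X ^ 3 * (X - 1) ^ 4) := by
    rw [hGdef]
    simp [Polynomial.map_sub, Polynomial.map_mul, Polynomial.map_pow, Polynomial.map_add,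
      Polynomial.map_one, map_C, map_X, map_mul, map_pow, RatFunc.algebraMap_X,
      RatFunc.algebraMap_C, map_ofNat]
  rwa [hmapG] at this
end
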